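/- Fix p, K ∈ [1,∞). Suppose (X,d_X) is a p-barycentric metric space with constant K via a barycenter map B. Then for every n ∈ ℕ, every symmetric stochastic matrix A = (a_{ij}) ∈ M_n(ℝ) and every f ∈ L_p^n(X): d_{L_p^n(X)}((A⊗I_X^n)(f), B((A⊗I_X^n)(f))) ≤ β_p(K)·d_{L_p^n(X)}((A⊗I_X^n)(f), B(f)). -/

import Mathlib

open scoped BigOperators ENNReal
open scoped Classical

noncomputable section

/-- A finitely supported probability measure on `X`. -/
structure FinProb (X : Type*) where
  w : X →₀ ℝ
  nonneg : ∀ x, 0 ≤ w x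
  total : w.sum (fun _ r => r) = 1

namespace FinProb

/-- The Dirac point mass at `x`. -/
def dirac {X : Type*} (x : X) : FinProb X where
  w := Finsupp.single x 1
  nonneg := fun y => by
    rw [Finsupp.single_apply]
    split <;> norm_num
  total := Finsupp.sum_single_index rfl

/-- The probability measure `∑ i, w i • δ_{Z i}` for nonnegative weights summing to 1. -/
def mix {ι X : Type*} [Fintype ι] (w : ι → ℝ) (Z : ι → X)
    (hw : ∀ i, 0 ≤ w i) (h1 : ∑ i, w i = 1) : FinProb X where
  w := ∑ i, Finsupp.single (Z i) (w i)
  nonneg := fun x => by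
    rw [Finset.sum_apply']
    refine Finset.sum_nonneg fun i _ => ?_
    rw [Finsupp.single_apply]
    split
    · exact hw i
    · exact le_rfl
  total := by
    rw [← Finsupp.sum_finset_sum_index (fun _ => rfl) (fun _ _ _ => rfl)]
    have h : ∀ i ∈ (Finset.univ : Finset ι),
        (Finsupp.single (Z i) (w i)).sum (fun _ r => r) = w i :=
      fun i _ => Finsupp.sum_single_index rfl
    rw [Finset.sum_congr rfl h]
    exact h1

/-- `mix` with normalization of the weights. -/
def mixN {ι X : Type*} [Fintype ι] (w : ι → ℝ) (Z : ι → X)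
    (hw : ∀ i, 0 ≤ w i) (hpos : 0 < ∑ i, w i) : FinProb X :=
  mix (fun i => w i / ∑ j, w j) Z
    (fun i => div_nonneg (hw i) hpos.le)
    (by rw [← Finset.sum_div, div_self (ne_of_gt hpos)])

/-- Integral of `f : X → ℝ` against `μ`. -/
def exp {X : Type*} (μ : FinProb X) (f : X → ℝ) : ℝ :=
  μ.w.sum fun x r => r * f x

end FinProb

/-- `π` is a coupling of `μ` and `ν`. -/
def IsCoupling {X : Type*} (π : FinProb (X × X)) (μ ν : FinProb X) : Prop :=
  (∀ x : X, (π.w.sum fun q r => if q.1 = x then r else 0) = μ.w x) ∧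
  (∀ y : X, (π.w.sum fun q r => if q.2 = y then r else 0) = ν.w y)

/-- The Wasserstein `p` distance between finitely supported probability measures. -/
def wassersteinDist {X : Type*} [MetricSpace X] (p : ℝ) (μ ν : FinProb X) : ℝ :=
  sInf {c : ℝ | ∃ π : FinProb (X × X), IsCoupling π μ ν ∧
    c = (π.exp fun q => dist q.1 q.2 ^ p) ^ p⁻¹}

/-- A barycenter map sends Dirac masses to their base points. -/
def IsBarycenterMap {X : Type*} (bary : FinProb X → X) : Prop :=
  ∀ x : X, bary (FinProb.dirac x) = x

/-- `X` is `W_p` barycentric with constant `Γ` via the barycenter map `bary`. -/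
def IsWBarycentric {X : Type*} [MetricSpace X] (p Γ : ℝ) (bary : FinProb X → X) : Prop :=
  IsBarycenterMap bary ∧
    ∀ μ ν : FinProb X, dist (bary μ) (bary ν) ≤ Γ * wassersteinDist p μ ν

/-- `X` is `p`-barycentric with constant `K` via the map `bary`. -/
def IsPBarycentric {X : Type*} [MetricSpace X] (p K : ℝ) (bary : FinProb X → X) : Prop :=
  ∀ (x : X) (μ : FinProb X),
    dist x (bary μ) ^ p + K ^ (-p) * (μ.exp fun y => dist (bary μ) y ^ p)
      ≤ μ.exp fun y => dist x y ^ p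

/-- A (possibly rectangular) matrix is stochastic if it has nonnegative entries and
each row sums to `1`. -/
def IsStochastic {n m : ℕ} (A : Matrix (Fin n) (Fin m) ℝ) : Prop :=
  (∀ i j, 0 ≤ A i j) ∧ ∀ i, ∑ j, A i j = 1

/-- `A` is reversible relative to the probability vector `π`. -/
def IsReversible {n : ℕ} (A : Matrix (Fin n) (Fin n) ℝ) (π : Fin n → ℝ) : Prop :=
  ∀ i j, π i * A i j = π j * A j i

/-- `π` is a probability vector. -/
def IsProbVec {n : ℕ} (π : Fin n → ℝ) : Prop :=
  (∀ i, 0 ≤ π i) ∧ ∑ i, π i = 1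

/-- The Cesàro average `𝒜_t(A) = (1/t) ∑_{s=1}^t A^s`. -/
def cesaro {n : ℕ} (A : Matrix (Fin n) (Fin n) ℝ) (t : ℕ) : Matrix (Fin n) (Fin n) ℝ :=
  (t : ℝ)⁻¹ • ∑ s ∈ Finset.Icc 1 t, A ^ s

/-- `X` has Markov type `p` with constant `M`. -/
def HasMarkovType (X : Type*) [MetricSpace X] (p M : ℝ) : Prop :=
  ∀ (n t : ℕ), 0 < n → 0 < t → ∀ (π : Fin n → ℝ) (A : Matrix (Fin n) (Fin n) ℝ),
    IsProbVec π → IsStochastic A → IsReversible A π → ∀ x : Fin n → X,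
      ∑ i, ∑ j, π i * (A ^ t) i j * dist (x i) (x j) ^ p ≤
        M ^ p * t * ∑ i, ∑ j, π i * A i j * dist (x i) (x j) ^ p

/-- `X` has metric Markov cotype `p` with constant `N`. -/
def HasMetricMarkovCotype (X : Type*) [MetricSpace X] (p N : ℝ) : Prop :=
  ∀ (n t : ℕ), 0 < n → 0 < t → ∀ (π : Fin n → ℝ) (A : Matrix (Fin n) (Fin n) ℝ),
    IsProbVec π → IsStochastic A → IsReversible A π → ∀ x : Fin n → X,
      ∃ y : Fin n → X,
        (∑ i, π i * dist (x i) (y i) ^ p) +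
          t * ∑ i, ∑ j, π i * A i j * dist (y i) (y j) ^ p ≤
        N ^ p * ∑ i, ∑ j, π i * cesaro A t i j * dist (x i) (x j) ^ p

/-- The Markov type `p` constant `M_p(X)`. -/
def markovTypeConst (X : Type*) [MetricSpace X] (p : ℝ) : ℝ :=
  sInf {M : ℝ | 0 < M ∧ HasMarkovType X p M}

/-- The metric Markov cotype `p` constant `N_p(X)`. -/
def markovCotypeConst (X : Type*) [MetricSpace X] (p : ℝ) : ℝ :=
  sInf {N : ℝ | 0 < N ∧ HasMetricMarkovCotype X p N}

/-- The nonlinear spectral gap quantity `γ₊(A, d_X^p)`. -/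
def gammaPlus (X : Type*) [MetricSpace X] {n : ℕ} (A : Matrix (Fin n) (Fin n) ℝ)
    (p : ℝ) : ℝ≥0∞ :=
  sInf {g : ℝ≥0∞ | ∀ x y : Fin n → X,
    ENNReal.ofReal (((n : ℝ) ^ 2)⁻¹ * ∑ i, ∑ j, dist (x i) (y j) ^ p) ≤
      (g / (n : ℝ≥0∞)) * ENNReal.ofReal (∑ i, ∑ j, A i j * dist (x i) (y j) ^ p)}

/-- The metric of `L_p^n(X)`. -/
def dLpn {X : Type*} [MetricSpace X] (p : ℝ) {n : ℕ} (f g : Fin n → X) : ℝ :=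
  ((n : ℝ)⁻¹ * ∑ i, dist (f i) (g i) ^ p) ^ p⁻¹

/-- The barycenter `B(f) = B((1/n) ∑ δ_{f(i)})` of `f : Fin n → X`. -/
def baryFun {X : Type*} [MetricSpace X] (bary : FinProb X → X) {n : ℕ} (hn : 0 < n)
    (f : Fin n → X) : X :=
  bary (FinProb.mixN (fun _ : Fin n => 1) f (fun _ => zero_le_one)
    (by
      simp only [Finset.sum_const, Finset.card_univ, Fintype.card_fin, nsmul_eq_mul, mul_one]
      exact_mod_cast hn))

/-- The nonlinear action `(A ⊗ I_X^n)(f)(i) = B(∑_j a_{ij} δ_{f(j)})`. -/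
def matAct {X : Type*} [MetricSpace X] (bary : FinProb X → X) {n : ℕ}
    (A : Matrix (Fin n) (Fin n) ℝ) (hA : IsStochastic A) (f : Fin n → X) : Fin n → X :=
  fun i => bary (FinProb.mix (fun j => A i j) f (fun j => hA.1 i j) (hA.2 i))

/-- The quantity `λ_p(T)`. -/
def lambdaP {X : Type*} [MetricSpace X] (p : ℝ) {n : ℕ} (hn : 0 < n)
    (bary : FinProb X → X) (T : (Fin n → X) → (Fin n → X)) : ℝ≥0∞ :=
  sInf {l : ℝ≥0∞ | ∀ f : Fin n → X,
    ENNReal.ofReal (dLpn p (T f) (fun _ => baryFun bary hn (T f))) ≤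
      l * ENNReal.ofReal (dLpn p f (fun _ => baryFun bary hn f))}

/-- A finite σ-algebra on a finite set `Ω`, described by its atoms. -/
structure FinPartition (Ω : Type*) [Fintype Ω] where
  atom : Ω → Finset Ω
  mem_atom : ∀ ω, ω ∈ atom ω
  atom_eq : ∀ ω ω', ω' ∈ atom ω → atom ω' = atom ω

/-- The conditional barycenter `B(Z | F)`. -/
def condBary {Ω X : Type*} [Fintype Ω] (bary : FinProb X → X)
    (μ : Ω → ℝ) (hμ : ∀ ω, 0 < μ ω) (F : FinPartition Ω) (Z : Ω → X) : Ω → X :=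
  fun ω => bary (FinProb.mixN (fun a : {a // a ∈ F.atom ω} => μ a) (fun a => Z a)
    (fun a => (hμ a).le)
    (Finset.sum_pos (fun a _ => hμ a) ⟨⟨ω, F.mem_atom ω⟩, Finset.mem_univ _⟩))


/-
For every `g ∈ L_p^n(X)` and every point `x ∈ X` one has `d(g, B(g)) ≤ β_p(K) d(g, x)`; the theorem
is the case `g = (A ⊗ I_X^n)(f)`, `x = B(f)`. Write `a = d(g, B(g))`, `b = d(g, x)` and
`c = d_X(x, B(g))`. The barycentric inequality for the uniform measure on the values of `g`, tested
at `x`, gives `c^p + K^{-p} a^p ≤ b^p`, and Minkowski's inequality gives `a ≤ b + c`. If `a > βb`,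
then `c > (β - 1)b`, whence `c^p + K^{-p} a^p > ((β - 1)^p + K^{-p} β^p) b^p = b^p`.
-/

open Finset

namespace FinProb

theorem exp_mix {ι X : Type*} [Fintype ι] (w : ι → ℝ) (Z : ι → X)
    (hw : ∀ i, 0 ≤ w i) (h1 : ∑ i, w i = 1) (φ : X → ℝ) :
    (mix w Z hw h1).exp φ = ∑ i, w i * φ (Z i) := by
  change (∑ i, Finsupp.single (Z i) (w i)).sum (fun x r => r * φ x) = _
  rw [← Finsupp.sum_finsetSum_index (fun x => zero_mul (φ x)) (fun x r s => add_mul r s (φ x))]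
  exact sum_congr rfl fun i _ => Finsupp.sum_single_index (zero_mul _)

theorem exp_mixN_const_one {ι X : Type*} [Fintype ι] (Z : ι → X)
    (hpos : 0 < ∑ _i : ι, (1 : ℝ)) (φ : X → ℝ) :
    (mixN (fun _ => 1) Z (fun _ => zero_le_one) hpos).exp φ =
      (Fintype.card ι : ℝ)⁻¹ * ∑ i, φ (Z i) := by
  rw [mixN, exp_mix, mul_sum]
  simp [div_eq_inv_mul]

end FinProb

section LpnMetric

variable {X : Type*} [MetricSpace X] {p : ℝ} {n : ℕ}

theorem dLpn_rpow (hp : p ≠ 0) (f g : Fin n → X) :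
    dLpn p f g ^ p = (n : ℝ)⁻¹ * ∑ i, dist (f i) (g i) ^ p := by
  unfold dLpn
  exact Real.rpow_inv_rpow (by positivity) hp

theorem dLpn_nonneg (f g : Fin n → X) : 0 ≤ dLpn p f g := by
  unfold dLpn
  positivity

theorem dLpn_const (hp : p ≠ 0) (hn : 0 < n) (x y : X) :
    dLpn p (fun _ : Fin n => x) (fun _ => y) = dist x y := by
  have hn' : (n : ℝ) ≠ 0 := by exact_mod_cast hn.ne'
  simp only [dLpn, sum_const, card_univ, Fintype.card_fin, nsmul_eq_mul, inv_mul_cancel_left₀ hn']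
  exact Real.rpow_rpow_inv dist_nonneg hp

theorem dLpn_triangle (hp : 1 ≤ p) (f g h : Fin n → X) :
    dLpn p f h ≤ dLpn p f g + dLpn p g h := by
  have hp0 : 0 < p := zero_lt_one.trans_le hp
  have hsum : ∀ u v : Fin n → X, 0 ≤ ∑ i, dist (u i) (v i) ^ p := fun u v =>
    sum_nonneg fun i _ => by positivity
  have hsplit : ∀ u v : Fin n → X,
      dLpn p u v = ((n : ℝ)⁻¹) ^ p⁻¹ * (∑ i, dist (u i) (v i) ^ p) ^ p⁻¹ := fun u v =>
    Real.mul_rpow (by positivity) (hsum u v)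
  have minkowski : (∑ i, dist (f i) (h i) ^ p) ^ p⁻¹ ≤
      (∑ i, dist (f i) (g i) ^ p) ^ p⁻¹ + (∑ i, dist (g i) (h i) ^ p) ^ p⁻¹ := by
    simp only [← one_div]
    refine le_trans ?_ (Real.Lp_add_le_of_nonneg univ hp (fun i _ => dist_nonneg)
      fun i _ => dist_nonneg)
    gcongr with i
    exact dist_triangle _ _ _
  rw [hsplit, hsplit f g, hsplit g h, ← mul_add]
  gcongr

end LpnMetric

theorem le_mul_of_rpow_add_le_of_le_add {p K β a b c : ℝ} (hp : 0 < p) (hK : 0 < K)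
    (hβ : 1 ≤ β) (hβeq : β ^ p + K ^ p * (β - 1) ^ p = K ^ p) (hb : 0 ≤ b)
    (hbary : c ^ p + K ^ (-p) * a ^ p ≤ b ^ p) (htri : a ≤ b + c) :
    a ≤ β * b := by
  by_contra! hlt
  have hKp : 0 < K ^ p := Real.rpow_pos_of_pos hK p
  have hweights : (β - 1) ^ p + K ^ (-p) * β ^ p = 1 := by
    rw [Real.rpow_neg hK.le]
    field_simp
    linarith
  have hc_gt : ((β - 1) * b) ^ p < c ^ p :=
    Real.rpow_lt_rpow (by nlinarith) (by linarith) hp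
  have ha_gt : (β * b) ^ p < a ^ p :=
    Real.rpow_lt_rpow (by positivity) hlt hp
  rw [Real.mul_rpow (by linarith) hb] at hc_gt
  rw [Real.mul_rpow (by linarith) hb] at ha_gt
  have hKinv : 0 < K ^ (-p) := Real.rpow_pos_of_pos hK _
  have hb_split : (β - 1) ^ p * b ^ p + K ^ (-p) * (β ^ p * b ^ p) = b ^ p := by
    linear_combination b ^ p * hweights
  linarith [mul_lt_mul_of_pos_left ha_gt hKinv]

section Barycentric

variable {X : Type*} [MetricSpace X] {p K : ℝ} {n : ℕ} {bary : FinProb X → X}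

theorem IsPBarycentric.rpow_dist_baryFun_add_le (hP : IsPBarycentric p K bary) (hp : p ≠ 0)
    (hn : 0 < n) (g : Fin n → X) (x : X) :
    dist x (baryFun bary hn g) ^ p + K ^ (-p) * dLpn p g (fun _ => baryFun bary hn g) ^ p ≤
      dLpn p g (fun _ => x) ^ p := by
  have h := hP x (FinProb.mixN (fun _ : Fin n => (1 : ℝ)) g (fun _ => zero_le_one)
    (by simpa using hn))
  simp only [FinProb.exp_mixN_const_one, Fintype.card_fin] at h
  simpa only [dLpn_rpow hp, baryFun, dist_comm] using h

theorem IsPBarycentric.dLpn_baryFun_le (hP : IsPBarycentric p K bary) (hp : 1 ≤ p) (hK : 0 < K)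
    (hn : 0 < n) {β : ℝ} (hβ : 1 ≤ β) (hβeq : β ^ p + K ^ p * (β - 1) ^ p = K ^ p)
    (g : Fin n → X) (x : X) :
    dLpn p g (fun _ => baryFun bary hn g) ≤ β * dLpn p g (fun _ => x) := by
  have hp0 : 0 < p := zero_lt_one.trans_le hp
  refine le_mul_of_rpow_add_le_of_le_add hp0 hK hβ hβeq (dLpn_nonneg _ _)
    (hP.rpow_dist_baryFun_add_le hp0.ne' hn g x) ?_
  calc dLpn p g (fun _ => baryFun bary hn g)
      ≤ dLpn p g (fun _ => x) + dLpn p (fun _ => x) (fun _ => baryFun bary hn g) :=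
        dLpn_triangle hp _ _ _
    _ = dLpn p g (fun _ => x) + dist x (baryFun bary hn g) := by
        rw [dLpn_const hp0.ne' hn]

end Barycentric

theorem statement14_general (p K : ℝ) (hp : 1 ≤ p) (hK : 1 ≤ K) (n : ℕ) (hn : 0 < n)
    (X : Type*) [MetricSpace X] (bary : FinProb X → X)
    (hP : IsPBarycentric p K bary)
    (A : Matrix (Fin n) (Fin n) ℝ) (hA : IsStochastic A)
    (f : Fin n → X)
    (β : ℝ) (hβ : 1 ≤ β) (hβeq : β ^ p + K ^ p * (β - 1) ^ p = K ^ p) :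
    dLpn p (matAct bary A hA f) (fun _ => baryFun bary hn (matAct bary A hA f)) ≤
      β * dLpn p (matAct bary A hA f) (fun _ => baryFun bary hn f) :=
  hP.dLpn_baryFun_le hp (zero_lt_one.trans_le hK) hn hβ hβeq _ _

theorem statement14 (p K : ℝ) (hp : 1 ≤ p) (hK : 1 ≤ K) (n : ℕ) (hn : 0 < n)
    (X : Type*) [MetricSpace X] (bary : FinProb X → X)
    (hBary : IsBarycenterMap bary) (hP : IsPBarycentric p K bary)
    (A : Matrix (Fin n) (Fin n) ℝ) (hA : IsStochastic A) (hsymm : A.IsSymm)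
    (f : Fin n → X)
    (β : ℝ) (hβ : 1 ≤ β) (hβeq : β ^ p + K ^ p * (β - 1) ^ p = K ^ p) :
    dLpn p (matAct bary A hA f) (fun _ => baryFun bary hn (matAct bary A hA f)) ≤
      β * dLpn p (matAct bary A hA f) (fun _ => baryFun bary hn f) :=
  statement14_general p K hp hK n hn X bary hP A hA f β hβ hβeq
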